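/- arXiv:2509.11995 — 5 statements merged into one kernel-verified Lean document; each statement's English description precedes it below -/
import Mathlib

section
/- For x in the interior of the second-order cone Qⁿ, define det(x) = x₀² − ‖x̄‖² and x⁻¹ = (1/det(x))·(x₀, −x̄). Then for μ > 0 and z = x − μx⁻¹, the unique minimizer over int(Qⁿ) of f(y) = (1/2)‖z − y‖² − (μ/2)log(det(y)) is x. -/
/-!
The function `y ↦ log (y₀² − ‖ȳ‖²)` is concave on the interior of the cone with gradient
`2 x⁻¹` at `x`: this is the reverse Cauchy–Schwarz inequality `det x · det y ≤ ⟨x, y⟩_L²` for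
the Lorentz form combined with `log t ≤ t − 1`. Since `z − x = −μ x⁻¹`, the first-order term of
`½‖z − y‖²` at `x` cancels the one of the barrier, leaving
`f y ≥ f x + ½‖y − x‖²`, which gives both minimality and uniqueness.
-/

open Real RealInnerProductSpace

section

variable {E : Type*} [NormedAddCommGroup E]

noncomputable section

def socDet (x : ℝ × E) : ℝ := x.1 ^ 2 - ‖x.2‖ ^ 2

def socInv [InnerProductSpace ℝ E] (x : ℝ × E) : ℝ × E := (x.1 / socDet x, (socDet x)⁻¹ • -x.2)

-- `ℝ × E` carries the sup norm, so the Euclidean distance is written out componentwise.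
def proxObjective (μ : ℝ) (z y : ℝ × E) : ℝ :=
  (1 / 2) * ((z.1 - y.1) ^ 2 + ‖z.2 - y.2‖ ^ 2) - (μ / 2) * log (socDet y)

end

lemma socDet_pos {x : ℝ × E} (hx : ‖x.2‖ < x.1) : 0 < socDet x := by
  have := norm_nonneg x.2
  unfold socDet
  nlinarith

variable [InnerProductSpace ℝ E]

def lorentzInner (x y : ℝ × E) : ℝ := x.1 * y.1 - ⟪x.2, y.2⟫

lemma lorentzInner_pos {x y : ℝ × E} (hx : ‖x.2‖ < x.1) (hy : ‖y.2‖ < y.1) :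
    0 < lorentzInner x y := by
  have hxy : ⟪x.2, y.2⟫ ≤ ‖x.2‖ * ‖y.2‖ := real_inner_le_norm _ _
  have := mul_lt_mul'' hx hy (norm_nonneg _) (norm_nonneg _)
  unfold lorentzInner
  linarith

lemma socDet_mul_socDet_le_sq_lorentzInner {x y : ℝ × E} (hx : ‖x.2‖ ≤ x.1)
    (hy : ‖y.2‖ ≤ y.1) : socDet x * socDet y ≤ lorentzInner x y ^ 2 := by
  have hxy : ⟪x.2, y.2⟫ ≤ ‖x.2‖ * ‖y.2‖ := real_inner_le_norm _ _
  have hnorm : ‖x.2‖ * ‖y.2‖ ≤ x.1 * y.1 :=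
    mul_le_mul hx hy (norm_nonneg _) ((norm_nonneg _).trans hx)
  calc socDet x * socDet y
      = (x.1 * y.1 - ‖x.2‖ * ‖y.2‖) ^ 2 - (x.1 * ‖y.2‖ - y.1 * ‖x.2‖) ^ 2 := by
        unfold socDet; ring
    _ ≤ (x.1 * y.1 - ‖x.2‖ * ‖y.2‖) ^ 2 := sub_le_self _ (sq_nonneg _)
    _ ≤ lorentzInner x y ^ 2 := by
        unfold lorentzInner
        exact pow_le_pow_left₀ (sub_nonneg.2 hnorm) (by linarith) 2

/-- `lorentzInner x y / socDet x` is the Euclidean inner product of `socInv x` with `y`, so this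
is the supergradient inequality of `log ∘ socDet` at `x`, with supergradient `2 • socInv x`. -/
lemma log_socDet_le {x y : ℝ × E} (hx : ‖x.2‖ < x.1) (hy : ‖y.2‖ < y.1) :
    log (socDet y) ≤ log (socDet x) + 2 * (lorentzInner x y / socDet x - 1) := by
  have hdx := socDet_pos hx
  have hdy := socDet_pos hy
  have ht := lorentzInner_pos hx hy
  have hprod : log (socDet x) + log (socDet y) ≤ 2 * log (lorentzInner x y) := by
    rw [← log_mul hdx.ne' hdy.ne', show 2 * log (lorentzInner x y) = log (lorentzInner x y ^ 2)
      by rw [log_pow]; norm_num]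
    exact log_le_log (mul_pos hdx hdy) (socDet_mul_socDet_le_sq_lorentzInner hx.le hy.le)
  have hratio : log (lorentzInner x y) - log (socDet x) ≤ lorentzInner x y / socDet x - 1 := by
    rw [← log_div ht.ne' hdx.ne']
    exact log_le_sub_one_of_pos (div_pos ht hdx)
  linarith

lemma sq_dist_sub_smul_socInv (x y : ℝ × E) (μ : ℝ) (hdet : socDet x ≠ 0) :
    let z := x - μ • socInv x
    (z.1 - y.1) ^ 2 + ‖z.2 - y.2‖ ^ 2 = (z.1 - x.1) ^ 2 + ‖z.2 - x.2‖ ^ 2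
      + 2 * μ * (lorentzInner x y / socDet x - 1) + ((y.1 - x.1) ^ 2 + ‖y.2 - x.2‖ ^ 2) := by
  intro z
  have hz₁ : z.1 - x.1 = -(μ / socDet x) * x.1 := by
    simp only [z, socInv, Prod.fst_sub, Prod.smul_fst, smul_eq_mul]; ring
  have hz₂ : z.2 - x.2 = (μ / socDet x) • x.2 := by
    simp only [z, socInv, Prod.snd_sub, Prod.smul_snd]; module
  rw [show z.1 - y.1 = (z.1 - x.1) - (y.1 - x.1) by ring,
    show z.2 - y.2 = (z.2 - x.2) - (y.2 - x.2) by abel, norm_sub_sq_real, hz₁, hz₂,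
    real_inner_smul_left, inner_sub_right, real_inner_self_eq_norm_sq, lorentzInner, socDet]
  unfold socDet at hdet
  field_simp
  ring

lemma proxObjective_add_sq_le {x y : ℝ × E} (hx : ‖x.2‖ < x.1) (hy : ‖y.2‖ < y.1) {μ : ℝ}
    (hμ : 0 ≤ μ) :
    proxObjective μ (x - μ • socInv x) x + (1 / 2) * ((y.1 - x.1) ^ 2 + ‖y.2 - x.2‖ ^ 2)
      ≤ proxObjective μ (x - μ • socInv x) y := by
  have hlog := mul_le_mul_of_nonneg_left (log_socDet_le hx hy) hμ
  have hsq := sq_dist_sub_smul_socInv x y μ (socDet_pos hx).ne'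
  simp only [proxObjective] at hsq ⊢
  linarith

lemma isMinOn_proxObjective {x : ℝ × E} (hx : ‖x.2‖ < x.1) {μ : ℝ} (hμ : 0 ≤ μ) :
    IsMinOn (proxObjective μ (x - μ • socInv x)) {y | ‖y.2‖ < y.1} x :=
  isMinOn_iff.2 fun y hy => by
    have hle := proxObjective_add_sq_le hx hy hμ
    have : 0 ≤ (y.1 - x.1) ^ 2 + ‖y.2 - x.2‖ ^ 2 := by positivity
    linarith

lemma eq_of_isMinOn_proxObjective {x y : ℝ × E} (hx : ‖x.2‖ < x.1) (hy : ‖y.2‖ < y.1)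
    {μ : ℝ} (hμ : 0 ≤ μ) (hmin : IsMinOn (proxObjective μ (x - μ • socInv x)) {y | ‖y.2‖ < y.1} y) :
    y = x := by
  have hle := proxObjective_add_sq_le hx hy hμ
  have hge := isMinOn_iff.1 hmin x hx
  have hsum : (y.1 - x.1) ^ 2 + ‖y.2 - x.2‖ ^ 2 = 0 := le_antisymm (by linarith) (by positivity)
  obtain ⟨h₁, h₂⟩ := (add_eq_zero_iff_of_nonneg (sq_nonneg _) (sq_nonneg _)).1 hsum
  rw [sq_eq_zero_iff, sub_eq_zero] at h₁
  rw [sq_eq_zero_iff, norm_eq_zero, sub_eq_zero] at h₂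
  exact Prod.ext h₁ h₂

end

/-- For x in the interior of the second-order cone (‖x̄‖ < x₀), with
det(x) = x₀² − ‖x̄‖², x⁻¹ = (1/det(x))·(x₀, −x̄), μ > 0 and z = x − μx⁻¹, the point x is
the unique minimizer over int(Qⁿ) of f(y) = (1/2)‖z − y‖² − (μ/2)·log(det(y)). -/
theorem stmt5 {E : Type*} [NormedAddCommGroup E] [InnerProductSpace ℝ E]
    (x : ℝ × E) (hx : ‖x.2‖ < x.1) (μ : ℝ) (hμ : 0 < μ)
    (detx : ℝ) (hdetx : detx = x.1 ^ 2 - ‖x.2‖ ^ 2)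
    (z : ℝ × E) (hz : z = (x.1 - μ * (x.1 / detx), x.2 - μ • ((detx)⁻¹ • (-x.2))))
    (S : Set (ℝ × E)) (hS : S = {y : ℝ × E | ‖y.2‖ < y.1})
    (f : ℝ × E → ℝ)
    (hf : ∀ y, f y = (1 / 2) * ((z.1 - y.1) ^ 2 + ‖z.2 - y.2‖ ^ 2)
        - (μ / 2) * Real.log (y.1 ^ 2 - ‖y.2‖ ^ 2)) :
    IsMinOn f S x ∧ ∀ y ∈ S, IsMinOn f S y → y = x := by
  have hz' : z = x - μ • socInv x := by rw [hz, hdetx]; rfl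
  have hf' : f = proxObjective μ (x - μ • socInv x) := funext fun y => by
    rw [hf, hz']; rfl
  subst hf' hS
  exact ⟨isMinOn_proxObjective hx hμ.le,
    fun y hy hmin => eq_of_isMinOn_proxObjective hx hy hμ.le hmin⟩
end

section
/- Let μ > 0, z ∈ ℝⁿ with z = (z₀, z̄), det(z) = z₀² − ‖z̄‖², and Δ = sqrt(det(z)² + 8μ‖z‖² + 16μ²). Define x₀ = (1/2)(z₀ + sqrt((‖z‖² + 4μ + Δ)/2)) and x̄ = (z̄/2)(1 + √2·z₀/sqrt(‖z‖² + 4μ + Δ)). Then as μ → 0⁺, the point x = (x₀, x̄) converges to the Euclidean projection of z onto the second-order cone Qⁿ. -/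
open Classical

/-- With Δ(μ) = sqrt(det(z)² + 8μ‖z‖² + 16μ²),
x₀(μ) = (1/2)(z₀ + sqrt((‖z‖² + 4μ + Δ)/2)) and
x̄(μ) = (z̄/2)(1 + √2·z₀/sqrt(‖z‖² + 4μ + Δ)), the point x(μ) = (x₀(μ), x̄(μ))
converges, as μ → 0⁺, to the Euclidean projection of z onto the second-order cone. -/
theorem stmt6 {E : Type*} [NormedAddCommGroup E] [InnerProductSpace ℝ E]
    (z : ℝ × E)
    (detz nz2 : ℝ) (hdetz : detz = z.1 ^ 2 - ‖z.2‖ ^ 2)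
    (hnz2 : nz2 = z.1 ^ 2 + ‖z.2‖ ^ 2)
    (x : ℝ → ℝ × E)
    (hx : ∀ μ : ℝ, x μ =
      ((1 / 2) * (z.1 + Real.sqrt ((nz2 + 4 * μ + Real.sqrt (detz ^ 2 + 8 * μ * nz2 + 16 * μ ^ 2)) / 2)),
       ((1 / 2) * (1 + Real.sqrt 2 * z.1 /
          Real.sqrt (nz2 + 4 * μ + Real.sqrt (detz ^ 2 + 8 * μ * nz2 + 16 * μ ^ 2)))) • z.2))
    (proj : ℝ × E)
    (hproj : proj = if ‖z.2‖ ≤ z.1 then z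
        else if z.1 ≤ -‖z.2‖ then 0
        else ((z.1 + ‖z.2‖) / 2, ((1 / 2) * (1 + z.1 / ‖z.2‖)) • z.2)) :
    Filter.Tendsto x (nhdsWithin 0 (Set.Ioi 0)) (nhds proj) := by
  have hxfun : x = fun μ =>
      ((1 / 2) * (z.1 + Real.sqrt ((nz2 + 4 * μ + Real.sqrt (detz ^ 2 + 8 * μ * nz2 + 16 * μ ^ 2)) / 2)),
       ((1 / 2) * (1 + Real.sqrt 2 * z.1 /
          Real.sqrt (nz2 + 4 * μ + Real.sqrt (detz ^ 2 + 8 * μ * nz2 + 16 * μ ^ 2)))) • z.2) :=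
    funext hx
  rw [hxfun]
  set b := ‖z.2‖ with hb
  have hb0 : 0 ≤ b := norm_nonneg _
  set M : ℝ := max |z.1| b with hM
  have hM0 : 0 ≤ M := le_trans (abs_nonneg _) (le_max_left _ _)
  set g : ℝ → ℝ := fun μ => nz2 + 4 * μ + Real.sqrt (detz ^ 2 + 8 * μ * nz2 + 16 * μ ^ 2)
    with hgdef
  have hgc : Continuous g := by
    apply Continuous.add
    · exact (continuous_const.add (continuous_const.mul continuous_id))
    · exact ((continuous_const.add ((continuous_const.mul continuous_id).mul
        continuous_const)).add (continuous_const.mul (continuous_pow 2))).sqrt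
  have hg0 : g 0 = 2 * M ^ 2 := by
    have h1 : g 0 = nz2 + |detz| := by
      simp [hgdef, Real.sqrt_sq_eq_abs]
    rcases le_total b |z.1| with h | h
    · have hdge : 0 ≤ detz := by
        have : b ^ 2 ≤ z.1 ^ 2 := by
          have := sq_abs z.1
          nlinarith [pow_le_pow_left₀ hb0 h 2]
        rw [hdetz]; linarith
      have hMe : M = |z.1| := max_eq_left h
      rw [h1, abs_of_nonneg hdge, hMe, hdetz, hnz2]
      nlinarith [sq_abs z.1]
    · have hdle : detz ≤ 0 := by
        have : z.1 ^ 2 ≤ b ^ 2 := by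
          nlinarith [pow_le_pow_left₀ (abs_nonneg z.1) h 2, sq_abs z.1]
        rw [hdetz]; linarith
      have hMe : M = b := max_eq_right h
      rw [h1, abs_of_nonpos hdle, hMe, hdetz, hnz2]
      ring
  have hsg2 : Real.sqrt (g 0 / 2) = M := by
    rw [hg0]
    rw [show (2 : ℝ) * M ^ 2 / 2 = M ^ 2 by ring]
    exact Real.sqrt_sq hM0
  have hsg : Real.sqrt (g 0) = Real.sqrt 2 * M := by
    rw [hg0, Real.sqrt_mul (by norm_num : (0:ℝ) ≤ 2), Real.sqrt_sq hM0]
  -- first component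
  have hA : Filter.Tendsto
      (fun μ => (1 / 2) * (z.1 + Real.sqrt ((nz2 + 4 * μ + Real.sqrt (detz ^ 2 + 8 * μ * nz2 + 16 * μ ^ 2)) / 2)))
      (nhdsWithin 0 (Set.Ioi 0)) (nhds ((1 / 2) * (z.1 + M))) := by
    have hc : Continuous (fun μ => (1 / 2) * (z.1 + Real.sqrt (g μ / 2))) :=
      continuous_const.mul (continuous_const.add ((hgc.div_const 2).sqrt))
    have := hc.continuousAt (x := (0 : ℝ))
    have h2 : (1 / 2) * (z.1 + Real.sqrt (g 0 / 2)) = (1 / 2) * (z.1 + M) := by rw [hsg2]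
    rw [ContinuousAt, h2] at this
    exact this.mono_left nhdsWithin_le_nhds
  -- first component of proj
  have h1 : proj.1 = (1 / 2) * (z.1 + M) := by
    rw [hproj]
    split_ifs with hc1 hc2
    · have hz1 : 0 ≤ z.1 := le_trans hb0 hc1
      have : M = z.1 := by rw [hM, abs_of_nonneg hz1]; exact max_eq_left hc1
      rw [this]; ring
    · have hz1 : z.1 ≤ 0 := le_trans hc2 (by linarith)
      have : M = -z.1 := by
        rw [hM, abs_of_nonpos hz1]
        exact max_eq_left (by linarith)
      rw [this]; simp
    · push_neg at hc1 hc2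
      have : M = b := by
        rw [hM]
        apply max_eq_right
        rcases le_total z.1 0 with h | h
        · rw [abs_of_nonpos h]; linarith
        · rw [abs_of_nonneg h]; linarith
      rw [this]; ring
  -- second component
  have hB : Filter.Tendsto
      (fun μ => ((1 / 2) * (1 + Real.sqrt 2 * z.1 /
          Real.sqrt (nz2 + 4 * μ + Real.sqrt (detz ^ 2 + 8 * μ * nz2 + 16 * μ ^ 2)))) • z.2)
      (nhdsWithin 0 (Set.Ioi 0)) (nhds proj.2) := by
    by_cases hz2 : z.2 = 0
    · have hp2 : proj.2 = 0 := by
        rw [hproj]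
        split_ifs
        · exact hz2
        · rfl
        · simp [hz2]
      rw [hp2]
      simp only [hz2, smul_zero]
      exact tendsto_const_nhds
    · have hbpos : 0 < b := by rw [hb]; exact norm_pos_iff.mpr hz2
      have hMpos : 0 < M := lt_of_lt_of_le hbpos (le_max_right _ _)
      have hsgpos : Real.sqrt (g 0) ≠ 0 := by
        rw [hsg]
        positivity
      have hc : ContinuousAt (fun μ => ((1 / 2) * (1 + Real.sqrt 2 * z.1 / Real.sqrt (g μ))) • z.2) 0 := by
        apply ContinuousAt.smul _ continuousAt_const
        apply ContinuousAt.mul continuousAt_const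
        apply ContinuousAt.add continuousAt_const
        exact ContinuousAt.div continuousAt_const (hgc.sqrt.continuousAt) hsgpos
      have hval : ((1 / 2) * (1 + Real.sqrt 2 * z.1 / Real.sqrt (g 0))) • z.2 = proj.2 := by
        have hdiv : Real.sqrt 2 * z.1 / Real.sqrt (g 0) = z.1 / M := by
          rw [hsg, mul_div_mul_left]
          exact ne_of_gt (Real.sqrt_pos.mpr (by norm_num))
        rw [hdiv, hproj]
        split_ifs with hc1 hc2
        · have hz1 : 0 ≤ z.1 := le_trans hb0 hc1
          have hMz : M = z.1 := by rw [hM, abs_of_nonneg hz1]; exact max_eq_left hc1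
          have hz1pos : z.1 ≠ 0 := by
            intro h; rw [h] at hMz; exact absurd hMz (ne_of_gt hMpos)
          rw [hMz, div_self hz1pos]
          norm_num
        · have hz1 : z.1 ≤ 0 := le_trans hc2 (by linarith)
          have hMz : M = -z.1 := by
            rw [hM, abs_of_nonpos hz1]
            exact max_eq_left (by linarith)
          have hz1ne : z.1 ≠ 0 := by
            intro h; rw [h] at hMz; simp at hMz; rw [hMz] at hMpos; exact lt_irrefl 0 hMpos
          rw [hMz, div_neg_eq_neg_div, div_self hz1ne]
          norm_num
        · push_neg at hc1 hc2
          have hMz : M = b := by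
            rw [hM]
            apply max_eq_right
            rcases le_total z.1 0 with h | h
            · rw [abs_of_nonpos h]; linarith
            · rw [abs_of_nonneg h]; linarith
          rw [hMz]
      rw [ContinuousAt, hval] at hc
      exact hc.mono_left nhdsWithin_le_nhds
  have hfin := hA.prodMk_nhds hB
  have hp : proj = ((1 / 2) * (z.1 + M), proj.2) := Prod.ext h1 rfl
  rw [hp]
  exact hfin
end

section
/- Let x ∈ int(Qⁿ) with det(x) = x₀² − ‖x̄‖² > 0 and x⁻¹ = (1/det(x))(x₀, −x̄). Then the Jacobian matrix of the map x ↦ x⁻¹ equals (1/det(x))·diag(1, −I_{n−1}) − 2·x⁻¹(x⁻¹)ᵀ. -/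
/-!
Write `J = diag(1, -I)`, so that `x⁻¹ = det(x)⁻¹ • J x`, and note that the derivative of
`det y = y₀² - ‖ȳ‖²` at `x` is `h ↦ 2 (x₀ h₀ - ⟪x̄, h̄⟫)`, which is `2 det(x) ⟪x⁻¹, h⟫`.
The quotient rule then gives `h ↦ det(x)⁻¹ • J h - 2 ⟪x⁻¹, h⟫ • x⁻¹`.
-/

open RealInnerProductSpace

section

variable {V W : Type*} [NormedAddCommGroup V] [NormedSpace ℝ V]
  [NormedAddCommGroup W] [NormedSpace ℝ W]

theorem HasFDerivAt.inv_smul_clm {f : V → ℝ} {f' : V →L[ℝ] ℝ} {x : V}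
    (hf : HasFDerivAt f f' x) (hx : f x ≠ 0) (A : V →L[ℝ] W) :
    HasFDerivAt (fun y => (f y)⁻¹ • A y)
      ((f x)⁻¹ • A - f'.smulRight ((f x ^ 2)⁻¹ • A x)) x := by
  refine (((hasDerivAt_inv hx).comp_hasFDerivAt x hf).smul A.hasFDerivAt).congr_fderiv ?_
  ext h
  simp [smul_smul, sub_eq_add_neg, mul_comm]

end

section

variable {E : Type*} [NormedAddCommGroup E] [InnerProductSpace ℝ E]

noncomputable def lorentzForm (x : ℝ × E) : ℝ × E →L[ℝ] ℝ :=
  x.1 • ContinuousLinearMap.fst ℝ ℝ E - (innerSL ℝ x.2).comp (ContinuousLinearMap.snd ℝ ℝ E)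

@[simp]
theorem lorentzForm_apply (x h : ℝ × E) : lorentzForm x h = x.1 * h.1 - ⟪x.2, h.2⟫ := rfl

theorem hasFDerivAt_fst_sq_sub_norm_snd_sq (x : ℝ × E) :
    HasFDerivAt (fun y : ℝ × E => y.1 ^ 2 - ‖y.2‖ ^ 2) (2 • lorentzForm x) x := by
  refine ((hasFDerivAt_fst.pow 2).fun_sub hasFDerivAt_snd.norm_sq).congr_fderiv ?_
  ext h <;> simp

noncomputable def lorentzReflection : ℝ × E →L[ℝ] ℝ × E :=
  (ContinuousLinearMap.id ℝ ℝ).prodMap (-ContinuousLinearMap.id ℝ E)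

@[simp]
theorem lorentzReflection_apply (y : ℝ × E) : lorentzReflection y = (y.1, -y.2) := rfl

end

/-- For x in the interior of the second-order cone with det(x) = x₀² − ‖x̄‖²
and x⁻¹ = (1/det(x))(x₀, −x̄), the Jacobian of the map x ↦ x⁻¹ equals
(1/det(x))·diag(1, −I) − 2·x⁻¹(x⁻¹)ᵀ, i.e. it acts on h by
h ↦ (1/det(x))·(h₀, −h̄) − 2⟨x⁻¹, h⟩·x⁻¹. -/
theorem stmt7 {E : Type*} [NormedAddCommGroup E] [InnerProductSpace ℝ E]
    (x : ℝ × E) (hx : ‖x.2‖ < x.1)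
    (det : ℝ × E → ℝ) (hdet : ∀ y, det y = y.1 ^ 2 - ‖y.2‖ ^ 2)
    (F : ℝ × E → ℝ × E) (hF : ∀ y, F y = ((det y)⁻¹ * y.1, (det y)⁻¹ • (-y.2))) :
    ∃ L : (ℝ × E) →L[ℝ] (ℝ × E), HasFDerivAt F L x ∧
      ∀ h : ℝ × E,
        L h = ((det x)⁻¹ * h.1 - 2 * ((F x).1 * h.1 + ⟪(F x).2, h.2⟫) * (F x).1,
               (det x)⁻¹ • (-h.2) - (2 * ((F x).1 * h.1 + ⟪(F x).2, h.2⟫)) • (F x).2) := by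
  have hdet_pos : 0 < det x := by
    rw [hdet, sub_pos]
    exact pow_lt_pow_left₀ hx (norm_nonneg _) two_ne_zero
  have hF_eq : F = fun y => (det y)⁻¹ • lorentzReflection y := by
    funext y
    simp [hF]
  have hdet_eq : det = fun y : ℝ × E => y.1 ^ 2 - ‖y.2‖ ^ 2 := funext hdet
  refine ⟨_, hF_eq ▸ (hdet_eq ▸ hasFDerivAt_fst_sq_sub_norm_snd_sq x).inv_smul_clm
    hdet_pos.ne' lorentzReflection, fun h => ?_⟩
  simp only [hF, FunLike.coe_sub, FunLike.coe_smul, Pi.sub_apply, Pi.smul_apply,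
    ContinuousLinearMap.smulRight_apply, lorentzReflection_apply, lorentzForm_apply,
    inner_neg_left, real_inner_smul_left, Prod.smul_mk, Prod.mk_sub_mk, smul_eq_mul, nsmul_eq_mul,
    Prod.mk.injEq]
  constructor
  · ring
  · match_scalars <;> ring
end

section
/- For any proper closed convex function f on ℝⁿ and any x ∈ ℝⁿ and σ > 0, the Moreau decomposition holds: x = prox_{σ f}(x) + σ·prox_{f*/σ}(x/σ), where f* is the Fenchel conjugate of f. -/
open RealInnerProductSpace

/-- Moreau decomposition: for proper closed convex f on ℝⁿ, x ∈ ℝⁿ and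
σ > 0, x = prox_{σf}(x) + σ·prox_{f*/σ}(x/σ), where f* is the Fenchel conjugate and
prox_{tg}(x) minimizes g(y) + (1/(2t))‖y−x‖². -/
theorem stmt11 {n : ℕ} (f : EuclideanSpace ℝ (Fin n) → EReal)
    (hproper : ∃ x, f x ≠ ⊤) (hnotbot : ∀ x, f x ≠ ⊥)
    (hclosed : LowerSemicontinuous f)
    (hconvex : ∀ x y : EuclideanSpace ℝ (Fin n), ∀ a b : ℝ, 0 ≤ a → 0 ≤ b → a + b = 1 →
      f (a • x + b • y) ≤ (a : EReal) * f x + (b : EReal) * f y)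
    (fstar : EuclideanSpace ℝ (Fin n) → EReal)
    (hfstar : ∀ z, fstar z = ⨆ x, (((⟪x, z⟫ : ℝ)) : EReal) - f x)
    (σ : ℝ) (hσ : 0 < σ) (x p q : EuclideanSpace ℝ (Fin n))
    (hp : IsMinOn (fun y => ((σ : EReal)) * f y + ((1 / 2 * ‖y - x‖ ^ 2 : ℝ) : EReal))
        Set.univ p)
    (hq : IsMinOn (fun y => ((σ⁻¹ : ℝ) : EReal) * fstar y
        + ((1 / 2 * ‖y - σ⁻¹ • x‖ ^ 2 : ℝ) : EReal)) Set.univ q) :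
    x = p + σ • q := by
  obtain ⟨x0, hx0⟩ := hproper
  have hσ' : (0:EReal) < (σ:EReal) := by exact_mod_cast hσ
  have hσinv : (0:ℝ) < σ⁻¹ := inv_pos.mpr hσ
  have hσinv' : (0:EReal) < ((σ⁻¹:ℝ):EReal) := by exact_mod_cast hσinv
  have hx0fin : f x0 = (((f x0).toReal : ℝ) : EReal) := (EReal.coe_toReal hx0 (hnotbot x0)).symm
  set fx0 : ℝ := (f x0).toReal with hfx0def
  -- f p is finite
  have hpx0 := isMinOn_iff.mp hp x0 (Set.mem_univ x0)
  have hfpne : f p ≠ ⊤ := by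
    intro htop
    rw [htop, EReal.mul_top_of_pos hσ', hx0fin, ← EReal.coe_mul, ← EReal.coe_add] at hpx0
    have h1 : (⊤:EReal) + ((1 / 2 * ‖p - x‖ ^ 2 : ℝ):EReal) = ⊤ := EReal.top_add_coe _
    rw [h1] at hpx0
    exact EReal.coe_ne_top _ (top_le_iff.mp hpx0)
  set fp : ℝ := (f p).toReal with hfpdef
  have hfp : f p = ((fp : ℝ) : EReal) := (EReal.coe_toReal hfpne (hnotbot p)).symm
  -- the candidate point
  set s : EuclideanSpace ℝ (Fin n) := σ⁻¹ • (x - p) with hs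
  -- subgradient inequality
  have hsub : ∀ u : EuclideanSpace ℝ (Fin n), ∀ fu : ℝ, f u = ((fu:ℝ):EReal) →
      ⟪x - p, u - p⟫ ≤ σ * (fu - fp) := by
    intro u fu hfu
    have key : ∀ t : ℝ, 0 < t → t ≤ 1 →
        0 ≤ σ * (fu - fp) + ⟪p - x, u - p⟫ + t * (1/2 * ‖u - p‖^2) := by
      intro t ht ht1
      have hyt : (1-t) • p + t • u = p + t • (u - p) := by module
      have hcv := hconvex p u (1-t) t (by linarith) ht.le (by ring)
      rw [hyt, hfp, hfu, ← EReal.coe_mul, ← EReal.coe_mul, ← EReal.coe_add] at hcv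
      have hytne : f (p + t • (u - p)) ≠ ⊤ := fun h => by
        rw [h] at hcv
        exact EReal.coe_ne_top _ (top_le_iff.mp hcv)
      set fyt : ℝ := (f (p + t • (u - p))).toReal with hfytdef
      have hfyt : f (p + t • (u - p)) = ((fyt:ℝ):EReal) :=
        (EReal.coe_toReal hytne (hnotbot _)).symm
      rw [hfyt, EReal.coe_le_coe_iff] at hcv
      have hmin := isMinOn_iff.mp hp (p + t • (u - p)) (Set.mem_univ _)
      rw [hfp, hfyt, ← EReal.coe_mul, ← EReal.coe_mul, ← EReal.coe_add, ← EReal.coe_add,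
        EReal.coe_le_coe_iff] at hmin
      have hexp : ‖p + t • (u - p) - x‖^2
          = ‖p - x‖^2 + 2 * (t * ⟪p - x, u - p⟫) + t^2 * ‖u - p‖^2 := by
        have h1 : p + t • (u - p) - x = (p - x) + t • (u - p) := by abel
        rw [h1, norm_add_sq_real, real_inner_smul_right, norm_smul]
        simp [mul_pow, abs_of_pos ht]
      rw [hexp] at hmin
      have h2 : 0 ≤ t * (σ * (fu - fp) + ⟪p - x, u - p⟫ + t * (1/2 * ‖u - p‖^2)) := by
        nlinarith [hmin, hcv, hσ.le, mul_le_mul_of_nonneg_left hcv hσ.le]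
      exact nonneg_of_mul_nonneg_right h2 ht
    have hA : 0 ≤ σ * (fu - fp) + ⟪p - x, u - p⟫ := by
      by_contra h
      push_neg at h
      set A : ℝ := σ * (fu - fp) + ⟪p - x, u - p⟫
      set C : ℝ := 1/2 * ‖u - p‖^2 with hC
      have hCnn : 0 ≤ C := by positivity
      have ht0 : (0:ℝ) < min 1 ((-A) / (2*C + 1)) := by
        apply lt_min one_pos
        apply div_pos (by linarith) (by positivity)
      have hkey := key _ ht0 (min_le_left _ _)
      have hle : min 1 ((-A) / (2*C + 1)) ≤ (-A) / (2*C + 1) := min_le_right _ _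
      have h5 : min 1 ((-A) / (2*C + 1)) * C ≤ (-A)/(2*C+1) * C :=
        mul_le_mul_of_nonneg_right hle hCnn
      have h6 : (-A)/(2*C+1) * C < -A := by
        rw [div_mul_eq_mul_div, div_lt_iff₀ (by positivity)]
        nlinarith
      linarith
    have hinner : ⟪p - x, u - p⟫ = -⟪x - p, u - p⟫ := by
      rw [← neg_sub x p, inner_neg_left]
    linarith [hA, hinner.le, hinner.ge]
  -- fstar at s
  have hinnersub : ∀ u : EuclideanSpace ℝ (Fin n), ∀ fu : ℝ, f u = ((fu:ℝ):EReal) →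
      ⟪u, s⟫ - fu ≤ ⟪p, s⟫ - fp := by
    intro u fu hfu
    have h1 := hsub u fu hfu
    have h2 : ⟪u - p, s⟫ = σ⁻¹ * ⟪x - p, u - p⟫ := by
      rw [hs, real_inner_smul_right, real_inner_comm]
    have h3 : ⟪u - p, s⟫ = ⟪u, s⟫ - ⟪p, s⟫ := by rw [inner_sub_left]
    have h4 : σ⁻¹ * ⟪x - p, u - p⟫ ≤ σ⁻¹ * (σ * (fu - fp)) :=
      mul_le_mul_of_nonneg_left h1 hσinv.le
    rw [← mul_assoc, inv_mul_cancel₀ hσ.ne', one_mul] at h4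
    linarith [h2, h3, h4]
  have hfstars : fstar s = ((⟪p, s⟫ - fp : ℝ) : EReal) := by
    rw [hfstar]
    apply le_antisymm
    · apply iSup_le
      intro u
      by_cases hu : f u = ⊤
      · rw [hu]
        simp
      · have hfu : f u = (((f u).toReal : ℝ) : EReal) := (EReal.coe_toReal hu (hnotbot u)).symm
        rw [hfu, ← EReal.coe_sub, EReal.coe_le_coe_iff]
        exact hinnersub u _ hfu
    · have := le_iSup (fun u => ((⟪u, s⟫ : ℝ) : EReal) - f u) p
      rw [hfp, ← EReal.coe_sub] at this
      exact this
  -- lower bound for fstar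
  have hfstarlb : ∀ y, ((⟪p, y⟫ - fp : ℝ) : EReal) ≤ fstar y := by
    intro y
    have := le_iSup (fun u => ((⟪u, y⟫ : ℝ) : EReal) - f u) p
    rw [hfp, ← EReal.coe_sub] at this
    rw [hfstar]
    exact this
  set c : EuclideanSpace ℝ (Fin n) := σ⁻¹ • x with hc
  have hsc : s - c = -(σ⁻¹ • p) := by rw [hs, hc]; module
  set Gs : ℝ := σ⁻¹ * (⟪p, s⟫ - fp) + 1/2 * ‖s - c‖^2 with hGs
  -- quadratic identity
  have hquad : ∀ y : EuclideanSpace ℝ (Fin n),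
      σ⁻¹ * (⟪p, y⟫ - fp) + 1/2 * ‖y - c‖^2 = Gs + 1/2 * ‖y - s‖^2 := by
    intro y
    have h1 : y - c = (y - s) + (s - c) := by abel
    rw [hGs, h1, norm_add_sq_real, hsc, inner_neg_right, real_inner_smul_right,
      inner_sub_left]
    have h2 : ⟪y, p⟫ = ⟪p, y⟫ := by rw [real_inner_comm]
    have h3 : ⟪s, p⟫ = ⟪p, s⟫ := by rw [real_inner_comm]
    rw [h2, h3]
    ring
  -- main lower bound
  have hGmin : ∀ y : EuclideanSpace ℝ (Fin n),
      ((Gs + 1/2 * ‖y - s‖^2 : ℝ) : EReal) ≤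
        ((σ⁻¹:ℝ):EReal) * fstar y + ((1/2 * ‖y - c‖^2 : ℝ) : EReal) := by
    intro y
    by_cases hy : fstar y = ⊤
    · rw [hy, EReal.mul_top_of_pos hσinv', EReal.top_add_coe]
      exact le_top
    · have hybot : fstar y ≠ ⊥ := by
        intro hb
        have := hfstarlb y
        rw [hb] at this
        exact EReal.coe_ne_bot _ (le_bot_iff.mp this)
      have hfy : fstar y = (((fstar y).toReal : ℝ) : EReal) := (EReal.coe_toReal hy hybot).symm
      set fy : ℝ := (fstar y).toReal
      have hfylb : ⟪p, y⟫ - fp ≤ fy := by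
        have := hfstarlb y
        rw [hfy, EReal.coe_le_coe_iff] at this
        exact this
      rw [hfy, ← EReal.coe_mul, ← EReal.coe_add, EReal.coe_le_coe_iff]
      have := hquad y
      nlinarith [mul_le_mul_of_nonneg_left hfylb hσinv.le]
  -- value at s
  have hgs : ((σ⁻¹:ℝ):EReal) * fstar s + ((1/2 * ‖s - c‖^2 : ℝ) : EReal) = ((Gs : ℝ) : EReal) := by
    rw [hfstars, ← EReal.coe_mul, ← EReal.coe_add, hGs]
  -- minimality of q
  have hqs := isMinOn_iff.mp hq s (Set.mem_univ s)
  rw [hgs] at hqs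
  have hqineq := hGmin q
  have : ((Gs + 1/2 * ‖q - s‖^2 : ℝ) : EReal) ≤ ((Gs : ℝ) : EReal) := le_trans hqineq hqs
  rw [EReal.coe_le_coe_iff] at this
  have hqs0 : ‖q - s‖^2 ≤ 0 := by linarith
  have hqeq : q = s := by
    have hn : ‖q - s‖^2 = 0 := le_antisymm hqs0 (by positivity)
    have hn2 : ‖q - s‖ = 0 := by
      exact pow_eq_zero_iff two_ne_zero |>.mp hn
    exact sub_eq_zero.mp (norm_eq_zero.mp hn2)
  rw [hqeq, hs, smul_smul, mul_inv_cancel₀ hσ.ne', one_smul]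
  abel
end

section
/- Let D be a symmetric positive semidefinite n×n matrix that is an orthogonal projection (D² = D = Dᵀ), and let σ, τ > 0. Then σD + D((1/σ)(I − D) + τI)⁻¹D = (σ + 1/τ)·D. -/
open Matrix

/-- For an orthogonal projection D (D² = D = Dᵀ, positive semidefinite)
and σ, τ > 0, one has σD + D((1/σ)(I − D) + τI)⁻¹D = (σ + 1/τ)·D. -/
theorem stmt15 {n : ℕ} (D : Matrix (Fin n) (Fin n) ℝ)
    (hDsymm : Dᵀ = D) (hDidem : D * D = D) (hDpsd : D.PosSemidef)
    (σ τ : ℝ) (hσ : 0 < σ) (hτ : 0 < τ) :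
    σ • D + D * (σ⁻¹ • ((1 : Matrix (Fin n) (Fin n) ℝ) - D) +
        τ • (1 : Matrix (Fin n) (Fin n) ℝ))⁻¹ * D = (σ + τ⁻¹) • D := by
  have hστ : σ⁻¹ + τ ≠ 0 := by positivity
  have hτ' : τ ≠ 0 := hτ.ne'
  obtain ⟨a, ha⟩ : ∃ a : ℝ, a = (σ⁻¹ + τ)⁻¹ := ⟨_, rfl⟩
  obtain ⟨b, hb⟩ : ∃ b : ℝ, b = a * σ⁻¹ / τ := ⟨_, rfl⟩
  set M : Matrix (Fin n) (Fin n) ℝ :=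
    σ⁻¹ • ((1 : Matrix (Fin n) (Fin n) ℝ) - D) + τ • (1 : Matrix (Fin n) (Fin n) ℝ) with hM
  have hright : M * (a • (1 : Matrix (Fin n) (Fin n) ℝ) + b • D) = 1 := by
    have h1 : σ⁻¹ * a + τ * a = 1 := by
      rw [ha]; field_simp
    have h2 : σ⁻¹ * b - σ⁻¹ * a - σ⁻¹ * b + τ * b = 0 := by
      rw [hb, ha]; field_simp; ring
    have e1 : M * (a • (1 : Matrix (Fin n) (Fin n) ℝ) + b • D)
        = (σ⁻¹ * a + τ * a) • (1 : Matrix (Fin n) (Fin n) ℝ)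
          + (σ⁻¹ * b - σ⁻¹ * a - σ⁻¹ * b + τ * b) • D := by
      rw [hM]
      simp only [add_mul, mul_add, sub_mul, Matrix.smul_mul, Matrix.mul_smul, one_mul,
        Matrix.mul_one, hDidem, smul_sub, smul_add, smul_smul]
      module
    rw [e1, h1, h2, one_smul, zero_smul, add_zero]
  have hinv : M⁻¹ = a • (1 : Matrix (Fin n) (Fin n) ℝ) + b • D :=
    Matrix.inv_eq_right_inv hright
  rw [hinv]
  rw [Matrix.mul_add, Matrix.mul_smul, Matrix.mul_smul, Matrix.mul_one, hDidem,
    Matrix.add_mul, Matrix.smul_mul, Matrix.smul_mul, hDidem]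
  have hab : a + b = τ⁻¹ := by
    rw [hb, ha]; field_simp; ring
  rw [← add_smul, hab, ← add_smul]
end
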